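/- arXiv:2508.10079 — 3 statements merged into one kernel-verified Lean document; each statement's English description precedes it below -/
import Mathlib

section
/- Let F be a field of characteristic 3 and let C be a 3×3 companion matrix over F with trace 1 such that none of 0, 1, −1 is an eigenvalue of C. If E and N are 3×3 matrices over F with C = E + N, E^3 = E, and N^3 = 0, then N^2 ≠ 0. -/
/-- The companion matrix of the polynomial `X^n + c_{n-1} X^{n-1} + ⋯ + c_0`. -/
def companionMatrix {F : Type*} [Field F] {n : ℕ} (c : Fin n → F) :
    Matrix (Fin n) (Fin n) F :=
  Matrix.of fun i j =>
    if (j : ℕ) = n - 1 then -c i else if (i : ℕ) = (j : ℕ) + 1 then 1 else 0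

theorem stmt_2 {F : Type*} [Field F] [CharP F 3] (C : Matrix (Fin 3) (Fin 3) F)
    (c : Fin 3 → F) (hC : C = companionMatrix c)
    (htr : C.trace = 1)
    (h0 : ¬ Module.End.HasEigenvalue (Matrix.toLin' C) 0)
    (h1 : ¬ Module.End.HasEigenvalue (Matrix.toLin' C) 1)
    (hm1 : ¬ Module.End.HasEigenvalue (Matrix.toLin' C) (-1))
    (E N : Matrix (Fin 3) (Fin 3) F)
    (hEN : C = E + N) (hE : E ^ 3 = E) (hN : N ^ 3 = 0) :
    N ^ 2 ≠ 0 := by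
  classical
  intro hN2
  -- basic char-3 facts
  have h3 : (3 : F) = 0 := by exact_mod_cast CharP.cast_eq_zero F 3
  have h2ne : (2 : F) ≠ 0 := by
    intro h2
    have : (1 : F) = 0 := by
      have : (3 : F) = 2 + 1 := by norm_num
      rw [h2, zero_add] at this; rw [← this, h3]
    exact one_ne_zero this
  have h1ne : (1 : F) ≠ 0 := one_ne_zero
  -- matrix char-3 fact
  have h3M : (3 : Matrix (Fin 3) (Fin 3) F) = 0 := by
    exact_mod_cast CharP.cast_eq_zero (Matrix (Fin 3) (Fin 3) F) 3
  -- trace of E is 1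
  have htrN : N.trace = 0 := by
    have hnil : IsNilpotent N := ⟨3, hN⟩
    exact (Matrix.isNilpotent_trace_of_isNilpotent hnil).eq_zero
  have htrE : E.trace = 1 := by
    have := htr
    rw [hEN, Matrix.trace_add, htrN, add_zero] at this
    exact this
  -- linear maps
  set e : Module.End F (Fin 3 → F) := Matrix.toLin' E with he
  set nn : Module.End F (Fin 3 → F) := Matrix.toLin' N with hnn
  have hdim : Module.finrank F (Fin 3 → F) = 3 := by simp
  -- kernel of nn has finrank ≥ 2
  have hker2 : 2 ≤ Module.finrank F (LinearMap.ker nn) := by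
    have hle : LinearMap.range nn ≤ LinearMap.ker nn := by
      rintro x ⟨y, rfl⟩
      simp only [LinearMap.mem_ker, hnn, Matrix.toLin'_apply]
      rw [Matrix.mulVec_mulVec, ← pow_two, hN2]
      simp
    have hrk := LinearMap.finrank_range_add_finrank_ker nn
    rw [hdim] at hrk
    have hmono : Module.finrank F (LinearMap.range nn) ≤
        Module.finrank F (LinearMap.ker nn) := Submodule.finrank_mono hle
    omega
  -- eigenspaces of e
  have hmem : ∀ (μ : F) (v : Fin 3 → F),
      v ∈ Module.End.eigenspace e μ ↔ E.mulVec v = μ • v := by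
    intro μ v
    rw [Module.End.mem_eigenspace_iff]
    simp [he, Matrix.toLin'_apply]
  -- each relevant eigenspace has finrank ≤ 1
  have hdisj : ∀ μ : F, ¬ Module.End.HasEigenvalue (Matrix.toLin' C) μ →
      Disjoint (Module.End.eigenspace e μ) (LinearMap.ker nn) := by
    intro μ hμ
    rw [disjoint_iff]
    by_contra hne
    obtain ⟨v, hv, hv0⟩ := Submodule.ne_bot_iff _ |>.mp hne
    rw [Submodule.mem_inf] at hv
    apply hμ
    refine Module.End.hasEigenvalue_of_hasEigenvector ⟨?_, hv0⟩
    rw [Module.End.mem_eigenspace_iff]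
    have h1' : e v = μ • v := Module.End.mem_eigenspace_iff.mp hv.1
    have h2' : nn v = 0 := hv.2
    have : Matrix.toLin' C = e + nn := by rw [hEN, he, hnn, map_add]
    rw [this]
    simp [h1', h2']
  have hfr1 : ∀ μ : F, ¬ Module.End.HasEigenvalue (Matrix.toLin' C) μ →
      Module.finrank F (Module.End.eigenspace e μ) ≤ 1 := by
    intro μ hμ
    have := Submodule.finrank_add_finrank_le_of_disjoint (hdisj μ hμ)
    rw [hdim] at this
    omega
  have hf0 := hfr1 0 h0
  have hf1 := hfr1 1 h1
  have hfm1 := hfr1 (-1) hm1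
  -- the three eigenspaces span
  have hsupK : Module.End.eigenspace e 0 ⊔ Module.End.eigenspace e 1 ⊔
      Module.End.eigenspace e (-1) = ⊤ := by
    rw [eq_top_iff]
    intro v _
    -- spectral projectors
    have hP0 : E * (1 - E * E) = 0 := by
      have : E * (1 - E * E) = E - E ^ 3 := by noncomm_ring
      rw [this, hE, sub_self]
    have hP1 : E * (-(E * E + E)) = 1 • (-(E * E + E)) := by
      have hx : E * (-(E * E + E)) = -(E ^ 3 + E ^ 2) := by noncomm_ring
      rw [hx, hE, one_smul]
      noncomm_ring
    have hPm1 : E * (E - E * E) = (-1 : F) • (E - E * E) := by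
      have hx : E * (E - E * E) = E ^ 2 - E ^ 3 := by noncomm_ring
      rw [hx, hE]
      have : ((-1 : F) • (E - E * E)) = E * E - E := by
        rw [neg_one_smul]; noncomm_ring
      rw [this]
      noncomm_ring
    have hsum : (1 - E * E) + (-(E * E + E)) + (E - E * E) = 1 := by
      have hx : (1 - E * E) + (-(E * E + E)) + (E - E * E) = 1 - 3 * (E * E) := by
        noncomm_ring
      rw [hx, h3M, zero_mul, sub_zero]
    have hv : v = (1 - E * E).mulVec v + (-(E * E + E)).mulVec v
        + (E - E * E).mulVec v := by
      rw [← Matrix.add_mulVec, ← Matrix.add_mulVec, hsum, Matrix.one_mulVec]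
    rw [hv]
    refine Submodule.add_mem _ (Submodule.add_mem _ ?_ ?_) ?_
    · apply Submodule.mem_sup_left; apply Submodule.mem_sup_left
      rw [hmem]
      rw [Matrix.mulVec_mulVec, hP0]
      simp
    · apply Submodule.mem_sup_left; apply Submodule.mem_sup_right
      rw [hmem]
      rw [Matrix.mulVec_mulVec, hP1]
      simp
    · apply Submodule.mem_sup_right
      rw [hmem]
      rw [Matrix.mulVec_mulVec, hPm1, Matrix.smul_mulVec]
  -- so each eigenspace has finrank exactly 1; in particular all are nonzero
  have hfrsum : 3 ≤ Module.finrank F (Module.End.eigenspace e 0)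
      + Module.finrank F (Module.End.eigenspace e 1)
      + Module.finrank F (Module.End.eigenspace e (-1)) := by
    have hA := Submodule.finrank_add_le_finrank_add_finrank
      (Module.End.eigenspace e 0 ⊔ Module.End.eigenspace e 1)
      (Module.End.eigenspace e (-1))
    have hB := Submodule.finrank_add_le_finrank_add_finrank
      (Module.End.eigenspace e 0) (Module.End.eigenspace e 1)
    rw [hsupK] at hA
    have htop : Module.finrank F (⊤ : Submodule F (Fin 3 → F)) = 3 := by
      rw [finrank_top, hdim]
    rw [htop] at hA
    omega
  have heq0 : Module.finrank F (Module.End.eigenspace e 0) = 1 := by omega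
  have heq1 : Module.finrank F (Module.End.eigenspace e 1) = 1 := by omega
  have heqm1 : Module.finrank F (Module.End.eigenspace e (-1)) = 1 := by omega
  -- pick eigenvectors
  have hpick : ∀ μ : F, Module.finrank F (Module.End.eigenspace e μ) = 1 →
      ∃ v, v ∈ Module.End.eigenspace e μ ∧ v ≠ 0 := by
    intro μ hμ
    have hbot : Module.End.eigenspace e μ ≠ ⊥ := by
      intro h
      rw [h, finrank_bot] at hμ
      omega
    exact (Submodule.ne_bot_iff _).mp hbot
  obtain ⟨v0, hv0m, hv0n⟩ := hpick 0 heq0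
  obtain ⟨v1, hv1m, hv1n⟩ := hpick 1 heq1
  obtain ⟨v2, hv2m, hv2n⟩ := hpick (-1) heqm1
  set μs : Fin 3 → F := ![0, 1, -1] with hμs
  set vs : Fin 3 → (Fin 3 → F) := ![v0, v1, v2] with hvs
  have hμinj : Function.Injective μs := by
    have h01 : (0 : F) ≠ 1 := fun h => h1ne h.symm
    have h0m : (0 : F) ≠ -1 := fun h => h1ne (by linear_combination h)
    have h1m : (1 : F) ≠ -1 := fun h => h2ne (by linear_combination h)
    intro i j hij
    fin_cases i <;> fin_cases j <;>
      simp only [hμs, Matrix.cons_val_zero, Matrix.cons_val_one, Matrix.head_cons,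
        Matrix.cons_val_two, Matrix.tail_cons, Fin.mk_zero, Fin.mk_one] at hij ⊢ <;>
      first
        | rfl
        | exact absurd hij h01
        | exact absurd hij.symm h01
        | exact absurd hij h0m
        | exact absurd hij.symm h0m
        | exact absurd hij h1m
        | exact absurd hij.symm h1m
  have hvec : ∀ i, e.HasEigenvector (μs i) (vs i) := by
    intro i
    fin_cases i <;> exact ⟨by assumption, by assumption⟩
  have hli : LinearIndependent F vs :=
    e.eigenvectors_linearIndependent' μs hμinj vs hvec
  have hcard : Fintype.card (Fin 3) = Module.finrank F (Fin 3 → F) := by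
    rw [hdim]; simp
  set b := basisOfLinearIndependentOfCardEqFinrank hli hcard with hb
  have hbcoe : ⇑b = vs := coe_basisOfLinearIndependentOfCardEqFinrank hli hcard
  -- trace computations
  have ht1 : LinearMap.trace F (Fin 3 → F) e = E.trace := by
    rw [LinearMap.trace_eq_matrix_trace F (Pi.basisFun F (Fin 3)),
      LinearMap.toMatrix_eq_toMatrix', he, LinearMap.toMatrix'_toLin']
  have hebi : ∀ i, e (b i) = μs i • b i := by
    intro i
    have := (hvec i).apply_eq_smul
    rw [hbcoe]
    exact this
  have ht2 : LinearMap.trace F (Fin 3 → F) e = 0 := by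
    rw [LinearMap.trace_eq_matrix_trace F b]
    have hdiag : ∀ i, (LinearMap.toMatrix b b e) i i = μs i := by
      intro i
      rw [LinearMap.toMatrix_apply, hebi i, map_smul, Module.Basis.repr_self]
      simp
    rw [Matrix.trace]
    simp only [Matrix.diag_apply, hdiag]
    rw [Fin.sum_univ_three]
    simp [hμs]
  rw [ht1, htrE] at ht2
  exact one_ne_zero ht2
end

section
/- Let F be a field, and let k ≤ n be positive integers and a_1,…,a_k integer multiples of the identity of F. Then every n×n companion matrix C over F is similar to C' + diag(a_1,…,a_k,0,…,0) for some n×n companion matrix C'. -/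
/-- Similarity of square matrices. -/
def MatSimilar {F : Type*} [Field F] {n : ℕ} (A B : Matrix (Fin n) (Fin n) F) : Prop :=
  ∃ P : (Matrix (Fin n) (Fin n) F)ˣ, A = (P : Matrix (Fin n) (Fin n) F) * B * ((↑(P⁻¹) : Matrix (Fin n) (Fin n) F))

section aux

variable {F : Type*} [Field F] {n : ℕ}

/-- the "fixed part": companion matrix with zero last column, plus the diagonal. -/
def Bmat (d : Fin n → F) : Matrix (Fin n) (Fin n) F :=
  companionMatrix 0 + Matrix.diagonal d

/-- iterates of `e₀` under `Bmat d`. -/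
def vvec (d : Fin n → F) : ℕ → Fin n → F
  | 0 => fun i => if (i : ℕ) = 0 then 1 else 0
  | j+1 => (Bmat d).mulVec (vvec d j)

lemma mulVec_Bmat (d : Fin n → F) (x : Fin n → F) (i : Fin n) :
    (Bmat d).mulVec x i =
      d i * x i + (if h : (i:ℕ) = 0 then 0
        else x ⟨(i:ℕ)-1, Nat.lt_of_le_of_lt (Nat.sub_le _ _) i.isLt⟩) := by
  classical
  have hstep : (Bmat d).mulVec x i =
      ∑ j : Fin n, ((if (j:ℕ) = n - 1 then (0:F) else if (i:ℕ) = (j:ℕ)+1 then 1 else 0)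
        + (if i = j then d i else 0)) * x j := by
    simp [Bmat, companionMatrix, Matrix.mulVec, dotProduct, Matrix.add_apply,
      Matrix.diagonal_apply]
  rw [hstep]
  have h1 : ∑ j : Fin n, ((if (j:ℕ) = n - 1 then (0:F) else if (i:ℕ) = (j:ℕ)+1 then 1 else 0)
        + (if i = j then d i else 0)) * x j
      = (∑ j : Fin n, (if (j:ℕ) = n - 1 then (0:F) else if (i:ℕ) = (j:ℕ)+1 then 1 else 0) * x j)
        + ∑ j : Fin n, (if i = j then d i else 0) * x j := by
    rw [← Finset.sum_add_distrib]
    exact Finset.sum_congr rfl fun j _ => by ring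
  rw [h1]
  have h2 : ∑ j : Fin n, (if i = j then d i else 0) * x j = d i * x i := by
    simp [Finset.sum_ite_eq]
  rw [h2, add_comm]
  congr 1
  by_cases hi : (i:ℕ) = 0
  · simp only [hi, dif_pos]
    apply Finset.sum_eq_zero
    intro j _
    have hne : ¬ ((i:ℕ) = (j:ℕ)+1) := by omega
    by_cases hj : (j:ℕ) = n - 1 <;> simp [hj, hne]
  · simp only [dif_neg hi]
    have hplt : (i:ℕ)-1 < n := Nat.lt_of_le_of_lt (Nat.sub_le _ _) i.isLt
    have hterm : ∀ j : Fin n,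
        (if (j:ℕ) = n - 1 then (0:F) else if (i:ℕ) = (j:ℕ)+1 then 1 else 0) * x j
        = if j = (⟨(i:ℕ)-1, hplt⟩ : Fin n) then x ⟨(i:ℕ)-1, hplt⟩ else 0 := by
      intro j
      by_cases hjp : j = (⟨(i:ℕ)-1, hplt⟩ : Fin n)
      · have hjv : (j:ℕ) = (i:ℕ)-1 := by rw [hjp]
        have hilt := i.isLt
        have hj1 : ¬ ((j:ℕ) = n - 1) := by omega
        have hj2 : (i:ℕ) = (j:ℕ)+1 := by omega
        rw [if_neg hj1, if_pos hj2, if_pos hjp, one_mul, hjp]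
      · have hne : ¬ ((i:ℕ) = (j:ℕ)+1) := by
          intro h
          exact hjp (Fin.ext (by simp; omega))
        by_cases hj : (j:ℕ) = n - 1 <;> simp [hj, hne, hjp]
    rw [Finset.sum_congr rfl fun j _ => hterm j, Finset.sum_ite_eq']
    simp

lemma vvec_support (d : Fin n → F) (j : ℕ) :
    ∀ i : Fin n, (j < (i:ℕ) → vvec d j i = 0) ∧ ((i:ℕ) = j → vvec d j i = 1) := by
  induction j with
  | zero =>
    intro i
    constructor
    · intro h; simp only [vvec]; rw [if_neg (by omega)]
    · intro h; simp only [vvec]; rw [if_pos h]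
  | succ j ih =>
    intro i
    have key : vvec d (j+1) i = d i * vvec d j i + (if h : (i:ℕ) = 0 then 0
        else vvec d j ⟨(i:ℕ)-1, Nat.lt_of_le_of_lt (Nat.sub_le _ _) i.isLt⟩) := by
      rw [show vvec d (j+1) = (Bmat d).mulVec (vvec d j) from rfl, mulVec_Bmat]
    constructor
    · intro hij
      have hi0 : ¬ ((i:ℕ) = 0) := by omega
      rw [key, dif_neg hi0]
      have h1 : vvec d j i = 0 := (ih i).1 (by omega)
      have h2 : vvec d j ⟨(i:ℕ)-1, Nat.lt_of_le_of_lt (Nat.sub_le _ _) i.isLt⟩ = 0 :=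
        (ih _).1 (by simp; omega)
      rw [h1, h2]; ring
    · intro hij
      have hi0 : ¬ ((i:ℕ) = 0) := by omega
      rw [key, dif_neg hi0]
      have h1 : vvec d j i = 0 := (ih i).1 (by omega)
      have h2 : vvec d j ⟨(i:ℕ)-1, Nat.lt_of_le_of_lt (Nat.sub_le _ _) i.isLt⟩ = 1 :=
        (ih _).2 (by simp; omega)
      rw [h1, h2]; ring

lemma key_lemma (hn : 0 < n) (c d : Fin n → F) :
    ∃ c' : Fin n → F,
      MatSimilar (companionMatrix c) (companionMatrix c' + Matrix.diagonal d) := by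
  classical
  set v : ℕ → Fin n → F := vvec d with hv
  have hlt : n - 1 < n := by omega
  set c' : Fin n → F := fun i => (Bmat d).mulVec (v (n-1)) i + ∑ l : Fin n, c l * v (l:ℕ) i
    with hc'
  set M : Matrix (Fin n) (Fin n) F := companionMatrix c' + Matrix.diagonal d with hM
  set E : Matrix (Fin n) (Fin n) F :=
    Matrix.of (fun i j => if (j:ℕ) = n - 1 then -c' i else 0) with hE
  have hMdec : M = Bmat d + E := by
    ext i j
    by_cases hj : (j:ℕ) = n - 1 <;>
      simp [hM, hE, Bmat, companionMatrix, Matrix.add_apply, hj] <;> ring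
  have hEmul : ∀ x : Fin n → F, ∀ i : Fin n,
      E.mulVec x i = -(x ⟨n-1, hlt⟩ * c' i) := by
    intro x i
    have hstep : E.mulVec x i = ∑ j : Fin n,
        (if (j:ℕ) = n - 1 then -c' i else 0) * x j := by
      simp [hE, Matrix.mulVec, dotProduct]
    rw [hstep]
    have hterm : ∀ j : Fin n, (if (j:ℕ) = n - 1 then -c' i else 0) * x j
        = if j = (⟨n-1, hlt⟩ : Fin n) then -(x ⟨n-1, hlt⟩ * c' i) else 0 := by
      intro j
      by_cases hj : j = (⟨n-1, hlt⟩ : Fin n)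
      · have hjv : (j:ℕ) = n - 1 := by rw [hj]
        rw [if_pos hjv, if_pos hj, hj]; ring
      · have hjv : ¬ ((j:ℕ) = n - 1) := by
          intro h; exact hj (Fin.ext (by simp; omega))
        rw [if_neg hjv, if_neg hj, zero_mul]
    rw [Finset.sum_congr rfl fun j _ => hterm j, Finset.sum_ite_eq']
    simp
  -- column computations
  have hcol1 : ∀ j : ℕ, j < n - 1 → M.mulVec (v j) = v (j+1) := by
    intro j hj
    rw [hMdec, Matrix.add_mulVec]
    have hv0 : v j ⟨n-1, hlt⟩ = 0 := (vvec_support d j ⟨n-1, hlt⟩).1 (by simp; omega)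
    have hz : E.mulVec (v j) = 0 := by
      funext i
      rw [hEmul, hv0]
      simp
    rw [hz, add_zero]
    rfl
  have hcolLast : M.mulVec (v (n-1)) = fun i => -(∑ l : Fin n, c l * v (l:ℕ) i) := by
    rw [hMdec, Matrix.add_mulVec]
    funext i
    have hvl : v (n-1) ⟨n-1, hlt⟩ = 1 := (vvec_support d (n-1) ⟨n-1, hlt⟩).2 (by simp)
    have hEv := hEmul (v (n-1)) i
    rw [hvl] at hEv
    simp only [Pi.add_apply, hEv, hc']
    ring
  -- the change-of-basis matrix
  set P : Matrix (Fin n) (Fin n) F := Matrix.of (fun i j : Fin n => v (j:ℕ) i) with hP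
  have hPtri : P.BlockTriangular id := by
    intro i j hij
    exact (vvec_support d (j:ℕ) i).1 hij
  have hPdet : P.det = 1 := by
    rw [Matrix.det_of_upperTriangular hPtri]
    apply Finset.prod_eq_one
    intro i _
    exact (vvec_support d (i:ℕ) i).2 rfl
  have hPunit : IsUnit P := (Matrix.isUnit_iff_isUnit_det P).mpr (by rw [hPdet]; exact isUnit_one)
  obtain ⟨U, hU⟩ := hPunit
  -- the intertwining identity
  have hMP : M * P = P * companionMatrix c := by
    ext i j
    have hL : (M * P) i j = M.mulVec (v (j:ℕ)) i := by
      simp [Matrix.mul_apply, Matrix.mulVec, dotProduct, hP]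
    have hR : (P * companionMatrix c) i j
        = ∑ l : Fin n, v (l:ℕ) i * companionMatrix c l j := by
      simp [Matrix.mul_apply, hP]
    rw [hL, hR]
    by_cases hj : (j:ℕ) = n - 1
    · have hsum : ∑ l : Fin n, v (l:ℕ) i * companionMatrix c l j
          = -(∑ l : Fin n, c l * v (l:ℕ) i) := by
        rw [← Finset.sum_neg_distrib]
        apply Finset.sum_congr rfl
        intro l _
        simp [companionMatrix, hj]
        ring
      rw [hsum, hj, hcolLast]
    · have hjlt : (j:ℕ) < n - 1 := by
        have := j.isLt; omega
      have htlt : (j:ℕ)+1 < n := by omega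
      have hterm : ∀ l : Fin n, v (l:ℕ) i * companionMatrix c l j
          = if l = (⟨(j:ℕ)+1, htlt⟩ : Fin n) then v ((j:ℕ)+1) i else 0 := by
        intro l
        by_cases hlt' : l = (⟨(j:ℕ)+1, htlt⟩ : Fin n)
        · have h1 : (l:ℕ) = (j:ℕ)+1 := by rw [hlt']
          rw [if_pos hlt']
          simp [companionMatrix, hj, h1]
        · have hne : ¬ ((l:ℕ) = (j:ℕ)+1) := by
            intro h; exact hlt' (Fin.ext (by simp; omega))
          rw [if_neg hlt']
          simp [companionMatrix, hj, hne]
      rw [Finset.sum_congr rfl fun l _ => hterm l]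
      rw [Finset.sum_ite_eq' Finset.univ]
      simp [hcol1 (j:ℕ) hjlt]
  refine ⟨c', U⁻¹, ?_⟩
  have h1 : (↑(U⁻¹⁻¹) : Matrix (Fin n) (Fin n) F) = P := by rw [inv_inv, hU]
  have h2 : (↑U⁻¹ : Matrix (Fin n) (Fin n) F) * M * P = companionMatrix c := by
    rw [Matrix.mul_assoc, hMP, ← Matrix.mul_assoc, ← hU, U.inv_mul, Matrix.one_mul]
  rw [h1, h2]

end aux

theorem stmt_11 {F : Type*} [Field F] (n k : ℕ) (hk : 0 < k) (hkn : k ≤ n)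
    (a : Fin k → ℤ) (c : Fin n → F) :
    ∃ c' : Fin n → F,
      MatSimilar (companionMatrix c)
        (companionMatrix c' +
          Matrix.diagonal (fun i : Fin n =>
            if h : (i : ℕ) < k then ((a ⟨i, h⟩ : ℤ) : F) else 0)) := by
  exact key_lemma (lt_of_lt_of_le hk hkn) c _
end

section
/- Let F be a field of odd characteristic p and C ∈ M_n(F) a companion matrix. Then C is the sum of a p-potent matrix and a nilpotent matrix if and only if the trace of C is an integer multiple of the identity of F. -/
open Polynomial Matrix

theorem exists_intCast_eq_iff_pow_char_eq_self {F : Type*} [Field F] (p : ℕ) [Fact p.Prime]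
    [CharP F p] (x : F) : (∃ m : ℤ, x = m) ↔ x ^ p = x := by
  rw [← Subfield.mem_bot_iff_pow_eq_self F p, ← ZMod.fieldRange_castHom_eq_bot p]
  constructor
  · rintro ⟨m, rfl⟩
    exact ⟨m, map_intCast _ _⟩
  · rintro ⟨a, rfl⟩
    exact ⟨ZMod.cast a, (ZMod.intCast_cast a).symm⟩

theorem pow_eq_self_of_pow_three_eq_self {M : Type*} [Monoid M] {x : M} (h : x ^ 3 = x) {k : ℕ}
    (hk : Odd k) : x ^ k = x := by
  obtain ⟨k, rfl⟩ := hk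
  induction k with
  | zero => simp
  | succ k ih => rw [show 2 * (k + 1) + 1 = 2 * k + 1 + 2 by ring, pow_add, ih, ← pow_succ', h]

namespace Matrix

variable {n R : Type*} [Fintype n] [DecidableEq n] [CommRing R]

theorem charpoly_pow_char (p : ℕ) [Fact p.Prime] [CharP R p] (M : Matrix n n R) :
    (M ^ p).charpoly = M.charpoly.map (frobenius R p) := by
  cases isEmpty_or_nonempty n
  · simp [charpoly_isEmpty]
  apply expand_injective (Fact.out : p.Prime).pos
  -- `(X - C M) ^ p = X ^ p - C (M ^ p)`, which is `charmatrix (M ^ p)` with `X` replaced by `X ^ p`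
  have key : M.charmatrix ^ p = (expand R p : R[X] →+* R[X]).mapMatrix (M ^ p).charmatrix := by
    apply matPolyEquiv.injective
    rw [matPolyEquiv_eq_X_pow_sub_C, map_pow, matPolyEquiv_charmatrix,
      sub_pow_char_of_commute _ ((C M).commute_X), ← C_pow]
  rw [← map_expand, map_frobenius_expand, charpoly, charpoly, ← det_pow, key, ← RingHom.map_det]
  rfl

theorem trace_pow_char (p : ℕ) [Fact p.Prime] [CharP R p] (M : Matrix n n R) :
    (M ^ p).trace = M.trace ^ p := by
  cases isEmpty_or_nonempty n
  · simp [trace, zero_pow (Fact.out : p.Prime).ne_zero]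
  rw [trace_eq_neg_charpoly_coeff, trace_eq_neg_charpoly_coeff, charpoly_pow_char, coeff_map,
    ← map_neg, frobenius_def]

theorem isNilpotent_of_isLowerTriangular [LinearOrder n] {M : Matrix n n R}
    (hM : M.IsLowerTriangular) (hdiag : ∀ i, M i i = 0) : IsNilpotent M := by
  refine ⟨Fintype.card n, ?_⟩
  have hχ : M.charpoly = X ^ Fintype.card n := by
    rw [charpoly, det_of_isLowerTriangular _ hM.charmatrix]
    simp [hdiag]
  simpa [hχ] using aeval_self_charpoly M

theorem vecMulVec_pow_succ (v w : n → R) (k : ℕ) :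
    vecMulVec v w ^ (k + 1) = (w ⬝ᵥ v) ^ k • vecMulVec v w := by
  induction k with
  | zero => simp
  | succ k ih =>
    rw [pow_succ, ih, smul_mul_assoc, vecMulVec_mul_vecMulVec, vecMulVec_smul, smul_smul, pow_succ]

theorem vecMulVec_add_vecMulVec_pow_three {v e u : n → R}
    (hev : e ⬝ᵥ v = 0) (hee : e ⬝ᵥ e = 1) (huv : u ⬝ᵥ v = 1) (hue : u ⬝ᵥ e = 0) :
    (vecMulVec v e + vecMulVec e u) ^ 3 = vecMulVec v e + vecMulVec e u := by
  simp [pow_succ, add_mul, mul_add, vecMulVec_mul_vecMulVec, hev, hee, huv, hue]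

theorem exists_vecMulVec_add_pow_eq_self {F : Type*} [Field F] {p : ℕ} (hp : Odd p) (v : n → F)
    (j : n) (hv : v j ^ p = v j) :
    ∃ u : n → F, u j = 0 ∧
      (vecMulVec v (Pi.single j 1) + vecMulVec (Pi.single j 1) u) ^ p =
        vecMulVec v (Pi.single j 1) + vecMulVec (Pi.single j 1) u := by
  have hp1 : 1 ≤ p := hp.pos
  by_cases hvj : v j = 0
  · by_cases hv0 : v = 0
    · exact ⟨0, rfl, by simp [hv0, zero_pow hp.pos.ne']⟩
    obtain ⟨i, hi⟩ : ∃ i, v i ≠ 0 := Function.ne_iff.mp hv0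
    have hij : i ≠ j := fun h => hi (h ▸ hvj)
    refine ⟨Pi.single i (v i)⁻¹, Pi.single_eq_of_ne hij.symm _, ?_⟩
    refine pow_eq_self_of_pow_three_eq_self (vecMulVec_add_vecMulVec_pow_three ?_ ?_ ?_ ?_) hp
    · simp [hvj]
    · simp
    · simp [hi]
    · simp [hij.symm]
  · refine ⟨0, rfl, ?_⟩
    have hvj1 : v j ^ (p - 1) = 1 :=
      mul_right_cancel₀ hvj (by rw [← pow_succ, Nat.sub_add_cancel hp1, hv, one_mul])
    rw [vecMulVec_zero, add_zero, ← Nat.sub_add_cancel hp1, vecMulVec_pow_succ,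
      single_one_dotProduct, hvj1, one_smul]

end Matrix

theorem trace_companionMatrix {F : Type*} [Field F] {n : ℕ} (c : Fin (n + 1) → F) :
    (companionMatrix c).trace = -c (Fin.last n) := by
  rw [trace, Finset.sum_eq_single (Fin.last n)]
  · simp [companionMatrix]
  · intro i _ hi
    have hi' : (i : ℕ) ≠ n := fun h => hi (Fin.ext h)
    simp [companionMatrix, hi']
  · simp

theorem isNilpotent_companionMatrix_sub {F : Type*} [Field F] {n : ℕ} (c : Fin (n + 1) → F)
    (u : Fin (n + 1) → F) (hu : u (Fin.last n) = 0) :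
    IsNilpotent (companionMatrix c - (vecMulVec (-c) (Pi.single (Fin.last n) 1) +
      vecMulVec (Pi.single (Fin.last n) 1) u)) := by
  apply isNilpotent_of_isLowerTriangular
  · intro i j hij
    have hij : (i : ℕ) < j := hij
    have hi : (i : ℕ) ≠ n := by omega
    simp only [companionMatrix, Matrix.sub_apply, Matrix.add_apply, of_apply, vecMulVec_apply,
      Pi.neg_apply, Pi.single_apply, Fin.ext_iff, Fin.val_last, Nat.add_sub_cancel]
    split_ifs <;> first | omega | ring
  · intro i
    rcases eq_or_ne i (Fin.last n) with rfl | hi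
    · simp [companionMatrix, vecMulVec_apply, hu]
    · have hi' : (i : ℕ) ≠ n := fun h => hi (Fin.ext h)
      simp [companionMatrix, vecMulVec_apply, hi, hi']

theorem stmt_16 {F : Type*} [Field F] (p : ℕ) [Fact p.Prime] (hp : Odd p)
    [CharP F p] (n : ℕ) (c : Fin n → F)
    (C : Matrix (Fin n) (Fin n) F) (hC : C = companionMatrix c) :
    (∃ E N : Matrix (Fin n) (Fin n) F,
        E ^ p = E ∧ IsNilpotent N ∧ C = E + N) ↔
      ∃ m : ℤ, C.trace = (m : F) := by
  rw [exists_intCast_eq_iff_pow_char_eq_self p]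
  constructor
  · rintro ⟨E, N, hE, hN, rfl⟩
    rw [trace_add, (isNilpotent_trace_of_isNilpotent hN).eq_zero, add_zero, ← trace_pow_char, hE]
  · intro htrace
    cases n with
    | zero => exact ⟨C, 0, Subsingleton.elim _ _, IsNilpotent.zero, (add_zero C).symm⟩
    | succ n =>
      subst hC
      rw [trace_companionMatrix] at htrace
      obtain ⟨u, hu, hE⟩ := exists_vecMulVec_add_pow_eq_self hp (-c) (Fin.last n) htrace
      exact ⟨_, _, hE, isNilpotent_companionMatrix_sub c u hu, (add_sub_cancel _ _).symm⟩
end
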